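/- The numerical range of the N×N nilpotent Jordan block J₀ (ones on the superdiagonal, zeros elsewhere) is the closed disc centered at the origin of radius cos(π/(N+1)). -/

import Mathlib

/-!
The weights `w n = sin (n π / (N + 1))` vanish at `n = 0` and `n = N + 1`, are positive in between,
and satisfy `w (n - 1) + w (n + 1) = 2 cos (π / (N + 1)) w n`: they form a positive Dirichlet
eigenvector of the path graph. Weighted AM-GM against them gives
`∑ |xₙ| |xₙ₊₁| ≤ cos (π / (N + 1)) ∑ |xₙ|²`, hence `W(J₀)` lies in the disc, and the vector with
entries `w (n + 1)` attains the radius. Conversely `W(J₀)` is circularly symmetric (conjugating by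
`diag (uⁿ)` multiplies `J₀` by `u`), connected as the image of the unit sphere, and contains `0`
and the radius, so it is the whole disc.
-/

noncomputable def opNorm {N : ℕ} (A : Matrix (Fin N) (Fin N) ℂ) : ℝ :=
  ‖Matrix.toEuclideanCLM (𝕜 := ℂ) A‖

noncomputable def numRad {N : ℕ} (A : Matrix (Fin N) (Fin N) ℂ) : ℝ :=
  sSup {r : ℝ | ∃ x : EuclideanSpace ℂ (Fin N), ‖x‖ = 1 ∧
    r = ‖(inner (𝕜 := ℂ) x (Matrix.toEuclideanCLM (𝕜 := ℂ) A x) : ℂ)‖}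

noncomputable def numRange {N : ℕ} (A : Matrix (Fin N) (Fin N) ℂ) : Set ℂ :=
  {z : ℂ | ∃ x : EuclideanSpace ℂ (Fin N), ‖x‖ = 1 ∧
    z = inner (𝕜 := ℂ) x (Matrix.toEuclideanCLM (𝕜 := ℂ) A x)}


def J0 (N : ℕ) : Matrix (Fin N) (Fin N) ℂ :=
  Matrix.of fun i j => if (j : ℕ) = (i : ℕ) + 1 then 1 else 0

open Real Finset ComplexConjugate Matrix

theorem sum_range_succ_eq_sum_range_of_eq_zero {M : Type*} [AddCommMonoid M] (f : ℕ → M) (N : ℕ)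
    (h0 : f 0 = 0) (hN : f N = 0) :
    ∑ n ∈ range N, f (n + 1) = ∑ n ∈ range N, f n := by
  have h := (sum_range_succ' f N).symm.trans (sum_range_succ f N)
  rwa [h0, hN, add_zero, add_zero] at h

section DirichletWeight

variable {N : ℕ} {c : ℝ} {w : ℕ → ℝ}

theorem sum_mul_succ_le_of_weight (hw0 : w 0 = 0) (hpos : ∀ n, 1 ≤ n → n ≤ N → 0 < w n)
    (hlast : w (N + 1) = 0) (hrec : ∀ n < N, w n + w (n + 2) = 2 * c * w (n + 1))
    (b : ℕ → ℝ) (hb : b N = 0) :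
    ∑ n ∈ range N, b n * b (n + 1) ≤ c * ∑ n ∈ range N, b n ^ 2 := by
  have amgm : ∀ n ∈ range N, b n * b (n + 1) ≤
      w (n + 2) / w (n + 1) * b n ^ 2 / 2 + w (n + 1) / w (n + 2) * b (n + 1) ^ 2 / 2 := by
    intro n hn
    have hn := mem_range.mp hn
    have h1 : 0 < w (n + 1) := hpos _ (by omega) (by omega)
    rcases (show n + 1 < N ∨ n + 1 = N by omega) with hlt | rfl
    · have h2 : 0 < w (n + 2) := hpos _ (by omega) hlt
      rw [div_mul_eq_mul_div, div_mul_eq_mul_div, div_div, div_div, div_add_div _ _ (by positivity)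
        (by positivity), le_div_iff₀ (by positivity)]
      nlinarith [sq_nonneg (w (n + 2) * b n - w (n + 1) * b (n + 1))]
    · simp [hb, hlast]
  have shift := sum_range_succ_eq_sum_range_of_eq_zero (fun n => w n / w (n + 1) * b n ^ 2 / 2) N
    (by simp [hw0]) (by simp [hb])
  calc ∑ n ∈ range N, b n * b (n + 1)
      ≤ ∑ n ∈ range N, (w (n + 2) / w (n + 1) * b n ^ 2 / 2
          + w (n + 1) / w (n + 2) * b (n + 1) ^ 2 / 2) := sum_le_sum amgm
    _ = ∑ n ∈ range N, (w n + w (n + 2)) / w (n + 1) * b n ^ 2 / 2 := by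
        rw [sum_add_distrib, shift, ← sum_add_distrib]
        refine sum_congr rfl fun n _ => ?_
        ring
    _ = c * ∑ n ∈ range N, b n ^ 2 := by
        rw [mul_sum]
        refine sum_congr rfl fun n hn => ?_
        have h1 : w (n + 1) ≠ 0 := (hpos _ (by omega) (by simpa using hn)).ne'
        rw [hrec n (mem_range.mp hn)]
        field_simp

theorem sum_weight_mul_succ (hw0 : w 0 = 0) (hlast : w (N + 1) = 0)
    (hrec : ∀ n < N, w n + w (n + 2) = 2 * c * w (n + 1)) :
    ∑ n ∈ range N, w (n + 1) * w (n + 2) = c * ∑ n ∈ range N, w (n + 1) ^ 2 := by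
  have shift := sum_range_succ_eq_sum_range_of_eq_zero (fun n => w n * w (n + 1)) N
    (by simp [hw0]) (by simp [hlast])
  have key : ∑ n ∈ range N, (w n + w (n + 2)) * w (n + 1)
      = 2 * (c * ∑ n ∈ range N, w (n + 1) ^ 2) := by
    rw [mul_sum, mul_sum]
    refine sum_congr rfl fun n hn => ?_
    rw [hrec n (mem_range.mp hn)]
    ring
  simp only [add_mul, sum_add_distrib] at key
  linarith [show ∑ n ∈ range N, w (n + 2) * w (n + 1) = ∑ n ∈ range N, w (n + 1) * w (n + 2)
    from sum_congr rfl fun n _ => mul_comm _ _]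

end DirichletWeight

section SineWeight

variable (N : ℕ)

theorem sin_mul_pi_div_succ_pos {n : ℕ} (h1 : 1 ≤ n) (hN : n ≤ N) :
    0 < sin (n * (π / (N + 1))) := by
  apply sin_pos_of_pos_of_lt_pi (by positivity)
  rw [← mul_div_assoc, div_lt_iff₀ (by positivity)]
  have : (n : ℝ) < N + 1 := by exact_mod_cast Nat.lt_succ_of_le hN
  nlinarith [pi_pos]

theorem sin_succ_mul_pi_div_succ : sin (((N + 1 : ℕ) : ℝ) * (π / (N + 1))) = 0 := by
  rw [Nat.cast_succ, mul_div_cancel₀ _ (by positivity), sin_pi]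

theorem sin_add_sin_mul_pi_div_succ (n : ℕ) :
    sin (n * (π / (N + 1))) + sin (((n + 2 : ℕ) : ℝ) * (π / (N + 1)))
      = 2 * cos (π / (N + 1)) * sin (((n + 1 : ℕ) : ℝ) * (π / (N + 1))) := by
  set θ := π / (N + 1)
  have h0 : (n : ℝ) * θ = (n + 1 : ℕ) * θ - θ := by push_cast; ring
  have h2 : ((n + 2 : ℕ) : ℝ) * θ = (n + 1 : ℕ) * θ + θ := by push_cast; ring
  rw [h0, h2, sin_sub, sin_add]
  ring

theorem sum_mul_succ_le_cos (b : ℕ → ℝ) (hb : b N = 0) :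
    ∑ n ∈ range N, b n * b (n + 1) ≤ cos (π / (N + 1)) * ∑ n ∈ range N, b n ^ 2 :=
  sum_mul_succ_le_of_weight (w := fun n => sin (n * (π / (N + 1)))) (by simp)
    (fun _ => sin_mul_pi_div_succ_pos N) (sin_succ_mul_pi_div_succ N)
    (fun n _ => sin_add_sin_mul_pi_div_succ N n) b hb

theorem sum_sin_mul_sin_succ :
    ∑ n ∈ range N, sin (((n + 1 : ℕ) : ℝ) * (π / (N + 1))) * sin (((n + 2 : ℕ) : ℝ) * (π / (N + 1)))
      = cos (π / (N + 1)) * ∑ n ∈ range N, sin (((n + 1 : ℕ) : ℝ) * (π / (N + 1))) ^ 2 :=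
  sum_weight_mul_succ (w := fun n => sin (n * (π / (N + 1)))) (by simp)
    (sin_succ_mul_pi_div_succ N) (fun n _ => sin_add_sin_mul_pi_div_succ N n)

end SineWeight

section PadZero

variable {α : Type*} [Zero α] {N : ℕ}

def padZero (x : Fin N → α) (n : ℕ) : α :=
  if h : n < N then x ⟨n, h⟩ else 0

theorem padZero_self (x : Fin N → α) : padZero x N = 0 := by
  simp [padZero]

theorem padZero_val (x : Fin N → α) (i : Fin N) : padZero x i = x i := by
  simp [padZero]

theorem padZero_of_eq_zero (f : ℕ → α) (hf : f N = 0) {n : ℕ} (hn : n ≤ N) :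
    padZero (fun i : Fin N => f i) n = f n := by
  rcases hn.lt_or_eq with h | rfl
  · simp [padZero, h]
  · simp [padZero, hf]

theorem sum_range_padZero {M : Type*} [AddCommMonoid M] (x : Fin N → α) (f : α → α → M) :
    ∑ n ∈ range N, f (padZero x n) (padZero x (n + 1))
      = ∑ i : Fin N, f (x i) (padZero x (i + 1)) := by
  rw [← Fin.sum_univ_eq_sum_range (fun n => f (padZero x n) (padZero x (n + 1)))]
  simp [padZero_val]

end PadZero

theorem sum_norm_padZero_sq {N : ℕ} (x : EuclideanSpace ℂ (Fin N)) :
    ∑ n ∈ range N, ‖padZero x n‖ ^ 2 = ‖x‖ ^ 2 := by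
  rw [EuclideanSpace.norm_sq_eq, ← Fin.sum_univ_eq_sum_range (fun n => ‖padZero x n‖ ^ 2)]
  simp [padZero_val]

theorem closedBall_subset_of_isPreconnected_of_mul_mem {S : Set ℂ} (hS : IsPreconnected S)
    (hrot : ∀ z ∈ S, ∀ u : ℂ, ‖u‖ = 1 → u * z ∈ S) (h0 : 0 ∈ S) {r : ℝ} (hr : 0 ≤ r)
    (hrS : (r : ℂ) ∈ S) :
    Metric.closedBall 0 r ⊆ S := by
  intro z hz
  obtain ⟨w, hwS, hwz⟩ : ‖z‖ ∈ norm '' S :=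
    (hS.image _ continuous_norm.continuousOn).Icc_subset (b := r) ⟨0, h0, norm_zero⟩
      ⟨r, hrS, by simp [hr]⟩ ⟨norm_nonneg z, by simpa using hz⟩
  rcases eq_or_ne w 0 with rfl | hw
  · rwa [norm_eq_zero.mp (hwz.symm.trans norm_zero)]
  · have hz : z ≠ 0 := norm_ne_zero_iff.mp (hwz ▸ norm_ne_zero_iff.mpr hw)
    simpa [hw] using hrot w hwS (z / w) (by simp [hwz, hz])

section NumRange

variable {N : ℕ}

theorem numRange_eq_image (A : Matrix (Fin N) (Fin N) ℂ) :
    numRange A = (fun x => inner ℂ x (toEuclideanCLM (𝕜 := ℂ) A x)) '' Metric.sphere 0 1 := by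
  ext z
  simp [numRange, eq_comm]

theorem isPreconnected_numRange (hN : 0 < N) (A : Matrix (Fin N) (Fin N) ℂ) :
    IsPreconnected (numRange A) := by
  have hrank : 1 < Module.rank ℝ (EuclideanSpace ℂ (Fin N)) := by
    apply Module.one_lt_rank_of_one_lt_finrank
    rw [← Module.finrank_mul_finrank ℝ ℂ, Complex.finrank_real_complex, finrank_euclideanSpace_fin]
    omega
  rw [numRange_eq_image]
  exact (isPreconnected_sphere hrank 0 1).image _ (by fun_prop)

theorem mem_numRange_of_inner_eq {A : Matrix (Fin N) (Fin N) ℂ} {x : EuclideanSpace ℂ (Fin N)}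
    (hx : x ≠ 0) {c : ℝ} (h : inner ℂ x (toEuclideanCLM (𝕜 := ℂ) A x) = c * ‖x‖ ^ 2) :
    (c : ℂ) ∈ numRange A := by
  have hx' : (‖x‖ : ℂ) ≠ 0 := by exact_mod_cast norm_ne_zero_iff.mpr hx
  refine ⟨(‖x‖⁻¹ : ℂ) • x, ?_, ?_⟩
  · rw [norm_smul, norm_inv, Complex.norm_real, norm_norm,
      inv_mul_cancel₀ (norm_ne_zero_iff.mpr hx)]
  · rw [map_smul, inner_smul_left, inner_smul_right, h, map_inv₀, Complex.conj_ofReal]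
    field_simp

end NumRange

section Jordan

variable {N : ℕ}

theorem J0_mulVec_apply (v : Fin N → ℂ) (i : Fin N) : (J0 N *ᵥ v) i = padZero v (i + 1) := by
  simp only [mulVec, dotProduct, J0, of_apply, ite_mul, one_mul, zero_mul, padZero]
  split_ifs with h
  · have hj (j : Fin N) : (j : ℕ) = i + 1 ↔ j = ⟨i + 1, h⟩ := (Fin.ext_iff (b := ⟨i + 1, h⟩)).symm
    simp only [hj, sum_ite_eq', mem_univ, if_true]
  · exact sum_eq_zero fun j _ => if_neg fun (hj : (j : ℕ) = i + 1) => h (hj ▸ j.isLt)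

theorem inner_toEuclideanCLM_J0 (x : EuclideanSpace ℂ (Fin N)) :
    inner ℂ x (toEuclideanCLM (𝕜 := ℂ) (J0 N) x)
      = ∑ n ∈ range N, conj (padZero x n) * padZero x (n + 1) := by
  rw [EuclideanSpace.inner_eq_star_dotProduct, ofLp_toEuclideanCLM,
    sum_range_padZero x (fun a b => conj a * b)]
  simp [dotProduct, J0_mulVec_apply, mul_comm]

theorem norm_inner_J0_le (x : EuclideanSpace ℂ (Fin N)) :
    ‖inner ℂ x (toEuclideanCLM (𝕜 := ℂ) (J0 N) x)‖ ≤ cos (π / (N + 1)) * ‖x‖ ^ 2 := by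
  rw [inner_toEuclideanCLM_J0, ← sum_norm_padZero_sq]
  calc ‖∑ n ∈ range N, conj (padZero x n) * padZero x (n + 1)‖
      ≤ ∑ n ∈ range N, ‖padZero x n‖ * ‖padZero x (n + 1)‖ := by
        refine (norm_sum_le _ _).trans_eq (sum_congr rfl fun n _ => ?_)
        rw [norm_mul, Complex.norm_conj]
    _ ≤ _ := sum_mul_succ_le_cos N (fun n => ‖padZero x n‖) (by simp [padZero_self])

theorem numRange_J0_subset_closedBall :
    numRange (J0 N) ⊆ Metric.closedBall 0 (cos (π / (N + 1))) := by
  rintro _ ⟨x, hx, rfl⟩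
  simpa [hx] using norm_inner_J0_le x

theorem mul_mem_numRange_J0 {z u : ℂ} (hz : z ∈ numRange (J0 N)) (hu : ‖u‖ = 1) :
    u * z ∈ numRange (J0 N) := by
  obtain ⟨x, hx, rfl⟩ := hz
  have hpad (n : ℕ) : padZero (fun i : Fin N => u ^ (i : ℕ) * x i) n = u ^ n * padZero x n := by
    unfold padZero
    split_ifs <;> simp
  have hconj : conj u * u = 1 := by
    rw [← Complex.normSq_eq_conj_mul_self, Complex.normSq_eq_norm_sq, hu]
    norm_num
  refine ⟨WithLp.toLp 2 fun i => u ^ (i : ℕ) * x i, ?_, ?_⟩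
  · rw [← hx, ← sq_eq_sq₀ (norm_nonneg _) (norm_nonneg _), EuclideanSpace.norm_sq_eq,
      EuclideanSpace.norm_sq_eq]
    simp [hu]
  · rw [inner_toEuclideanCLM_J0, inner_toEuclideanCLM_J0, mul_sum]
    refine sum_congr rfl fun n _ => ?_
    simp only [hpad, map_mul, map_pow]
    linear_combination (-(conj (padZero x n) * padZero x (n + 1) * u)) * pow_mul_pow_eq_one n hconj

theorem zero_mem_numRange_J0 (hN : 0 < N) : (0 : ℂ) ∈ numRange (J0 N) := by
  set x := EuclideanSpace.single (⟨0, hN⟩ : Fin N) (1 : ℂ)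
  have hx : x ≠ 0 := by simp [x]
  have h : inner ℂ x (toEuclideanCLM (𝕜 := ℂ) (J0 N) x) = ((0 : ℝ) : ℂ) * ‖x‖ ^ 2 := by
    rw [inner_toEuclideanCLM_J0, Complex.ofReal_zero, zero_mul]
    refine sum_eq_zero fun n _ => ?_
    simp [x, padZero, Fin.ext_iff]
  simpa using mem_numRange_of_inner_eq hx h

theorem cos_mem_numRange_J0 (hN : 0 < N) : (cos (π / (N + 1)) : ℂ) ∈ numRange (J0 N) := by
  set f : ℕ → ℂ := fun n => (sin (((n + 1 : ℕ) : ℝ) * (π / (N + 1))) : ℂ)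
  have hfN : f N = 0 := by
    simp only [f]
    rw [sin_succ_mul_pi_div_succ, Complex.ofReal_zero]
  set w : EuclideanSpace ℂ (Fin N) := WithLp.toLp 2 fun i => f i
  have hpad {n : ℕ} (hn : n ≤ N) : padZero w n = f n := padZero_of_eq_zero f hfN hn
  have hw : w ≠ 0 := by
    have : w ⟨0, hN⟩ ≠ 0 := Complex.ofReal_ne_zero.mpr (sin_mul_pi_div_succ_pos N le_rfl hN).ne'
    exact fun h => this (by simp [h])
  refine mem_numRange_of_inner_eq hw ?_
  rw [inner_toEuclideanCLM_J0, ← Complex.ofReal_pow, ← sum_norm_padZero_sq]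
  have hinner : ∑ n ∈ range N, conj (padZero w n) * padZero w (n + 1)
      = ((∑ n ∈ range N, sin (((n + 1 : ℕ) : ℝ) * (π / (N + 1)))
          * sin (((n + 2 : ℕ) : ℝ) * (π / (N + 1))) : ℝ) : ℂ) := by
    rw [Complex.ofReal_sum]
    refine sum_congr rfl fun n hn => ?_
    rw [hpad (mem_range.mp hn).le, hpad (mem_range.mp hn), Complex.conj_ofReal, Complex.ofReal_mul]
  have hnorm : ∑ n ∈ range N, ‖padZero w n‖ ^ 2
      = ∑ n ∈ range N, sin (((n + 1 : ℕ) : ℝ) * (π / (N + 1))) ^ 2 :=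
    sum_congr rfl fun n hn => by
      rw [hpad (mem_range.mp hn).le, Complex.norm_real, Real.norm_eq_abs, sq_abs]
  rw [hinner, hnorm, sum_sin_mul_sin_succ, Complex.ofReal_mul]

end Jordan

theorem stmt_3 {N : ℕ} (hN : 0 < N) :
    numRange (J0 N) = Metric.closedBall (0 : ℂ) (Real.cos (Real.pi / (N + 1))) := by
  have hcos : 0 ≤ cos (π / (N + 1)) := by
    have hθ : 0 < π / (N + 1) := by positivity
    have h2 : (2 : ℝ) ≤ N + 1 := by norm_cast; omega
    exact cos_nonneg_of_mem_Icc
      ⟨by linarith [pi_pos], div_le_div_of_nonneg_left pi_pos.le two_pos h2⟩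
  refine numRange_J0_subset_closedBall.antisymm ?_
  exact closedBall_subset_of_isPreconnected_of_mul_mem (isPreconnected_numRange hN _)
    (fun _ hz _ hu => mul_mem_numRange_J0 hz hu) (zero_mem_numRange_J0 hN) hcos
    (cos_mem_numRange_J0 hN)
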